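/- The algebra 𝒩 admits a Hopf algebra structure over ℝ whose coproduct, counit and antipode satisfy Δ(K) = K⊗K, Δ(θ) = θ⊗1 + K⊗θ, Δ(θ̄) = θ̄⊗1 + K⊗θ̄, ε(K) = 1, ε(θ) = ε(θ̄) = 0, S(K) = K, S(θ) = −Kθ, and S(θ̄) = −Kθ̄ (in particular these formulas on the generators extend to a well-defined algebra homomorphism Δ: 𝒩 → 𝒩⊗𝒩, an algebra homomorphism ε: 𝒩 → ℝ, and an antipode S satisfying the Hopf algebra axioms). -/

import Mathlib

noncomputable section

open TensorProduct

/-- The quadratic form `q(x₀,x₁,x₂) = x₀²` on `ℝ³`. -/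
def Nform : QuadraticForm ℝ (Fin 3 → ℝ) :=
  QuadraticMap.weightedSumSquares ℝ (fun i : Fin 3 => if i = 0 then (1 : ℝ) else 0)

/-- The algebra `𝒩 = ℤ/2 ⋉ Λ*ℝ²`, realized as the Clifford algebra of `Nform`. -/
abbrev NA := CliffordAlgebra Nform

/-- The generator `K`. -/
def K : NA := CliffordAlgebra.ι Nform (Pi.single 0 1)

/-- The generator `θ`. -/
def θ : NA := CliffordAlgebra.ι Nform (Pi.single 1 1)

/-- The generator `θ̄`. -/
def θb : NA := CliffordAlgebra.ι Nform (Pi.single 2 1)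

/-- `ρ := θ̄θ`. -/
def ρ : NA := θb * θ

lemma Nform_apply (v : Fin 3 → ℝ) : Nform v = v 0 * v 0 := by
  simp [Nform, QuadraticMap.weightedSumSquares_apply, Fin.sum_univ_three]

lemma polar_eq (v w : Fin 3 → ℝ) : QuadraticMap.polar Nform v w = 2 * (v 0 * w 0) := by
  simp [QuadraticMap.polar, Nform_apply, Pi.add_apply]; ring

lemma K_sq : K * K = 1 := by
  rw [K, CliffordAlgebra.ι_sq_scalar, Nform_apply]
  simp

lemma θ_sq : θ * θ = 0 := by
  rw [θ, CliffordAlgebra.ι_sq_scalar, Nform_apply]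
  simp

lemma θb_sq : θb * θb = 0 := by
  rw [θb, CliffordAlgebra.ι_sq_scalar, Nform_apply]
  simp

lemma Kθ_anti : K * θ + θ * K = 0 := by
  rw [K, θ, CliffordAlgebra.ι_mul_ι_add_swap, polar_eq]
  simp

lemma Kθb_anti : K * θb + θb * K = 0 := by
  rw [K, θb, CliffordAlgebra.ι_mul_ι_add_swap, polar_eq]
  simp

lemma θθb_anti : θ * θb + θb * θ = 0 := by
  rw [θ, θb, CliffordAlgebra.ι_mul_ι_add_swap, polar_eq]
  simp

def fΔ : (Fin 3 → ℝ) →ₗ[ℝ] NA ⊗[ℝ] NA where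
  toFun v := v 0 • (K ⊗ₜ[ℝ] K) + v 1 • (θ ⊗ₜ[ℝ] 1 + K ⊗ₜ[ℝ] θ)
      + v 2 • (θb ⊗ₜ[ℝ] 1 + K ⊗ₜ[ℝ] θb)
  map_add' v w := by simp [add_smul]; abel
  map_smul' c v := by simp [smul_smul, smul_add]

lemma θK : θ * K = -(K * θ) := eq_neg_of_add_eq_zero_left (by rw [add_comm]; exact Kθ_anti)
lemma θbK : θb * K = -(K * θb) := eq_neg_of_add_eq_zero_left (by rw [add_comm]; exact Kθb_anti)
lemma θbθ : θb * θ = -(θ * θb) := eq_neg_of_add_eq_zero_left (by rw [add_comm]; exact θθb_anti)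

lemma fΔ_sq (v : Fin 3 → ℝ) : fΔ v * fΔ v = algebraMap ℝ (NA ⊗[ℝ] NA) (Nform v) := by
  simp only [fΔ, LinearMap.coe_mk, AddHom.coe_mk, Nform_apply, Algebra.algebraMap_eq_smul_one,
    Algebra.TensorProduct.one_def]
  simp only [mul_add, add_mul, smul_mul_assoc, mul_smul_comm, smul_smul,
    Algebra.TensorProduct.tmul_mul_tmul, K_sq, θ_sq, θb_sq, θK, θbK, θbθ, one_mul, mul_one,
    TensorProduct.zero_tmul, TensorProduct.tmul_zero, TensorProduct.neg_tmul,
    TensorProduct.tmul_neg, smul_zero, add_zero, zero_add, smul_neg]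
  module

def Δ : NA →ₐ[ℝ] NA ⊗[ℝ] NA := CliffordAlgebra.lift Nform ⟨fΔ, fΔ_sq⟩

lemma Δ_ι (v : Fin 3 → ℝ) : Δ (CliffordAlgebra.ι Nform v) = fΔ v :=
  CliffordAlgebra.lift_ι_apply ..

lemma ΔK : Δ K = K ⊗ₜ[ℝ] K := by
  rw [K, Δ_ι]; simp [fΔ, Pi.single_apply]; rfl

lemma Δθ : Δ θ = θ ⊗ₜ[ℝ] 1 + K ⊗ₜ[ℝ] θ := by
  rw [θ, Δ_ι]; simp [fΔ, Pi.single_apply]; rfl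

lemma Δθb : Δ θb = θb ⊗ₜ[ℝ] 1 + K ⊗ₜ[ℝ] θb := by
  rw [θb, Δ_ι]; simp [fΔ, Pi.single_apply]; rfl

def fε : (Fin 3 → ℝ) →ₗ[ℝ] ℝ where
  toFun v := v 0
  map_add' v w := rfl
  map_smul' c v := rfl

def ε : NA →ₐ[ℝ] ℝ := CliffordAlgebra.lift Nform ⟨fε, fun v => by simp [fε, Nform_apply]⟩

lemma ε_ι (v : Fin 3 → ℝ) : ε (CliffordAlgebra.ι Nform v) = v 0 :=
  CliffordAlgebra.lift_ι_apply ..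

lemma εK : ε K = 1 := by rw [K, ε_ι]; simp
lemma εθ : ε θ = 0 := by rw [θ, ε_ι]; simp
lemma εθb : ε θb = 0 := by rw [θb, ε_ι]; simp

def fS : (Fin 3 → ℝ) →ₗ[ℝ] NAᵐᵒᵖ where
  toFun v := MulOpposite.op (v 0 • K - v 1 • (K * θ) - v 2 • (K * θb))
  map_add' v w := by simp [add_smul]; abel
  map_smul' c v := by simp [smul_smul, smul_sub]

lemma fS_sq (v : Fin 3 → ℝ) : fS v * fS v = algebraMap ℝ NAᵐᵒᵖ (Nform v) := by
  simp only [fS, LinearMap.coe_mk, AddHom.coe_mk, ← MulOpposite.op_mul,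
    ← MulOpposite.op_one]
  rw [show (algebraMap ℝ NAᵐᵒᵖ (Nform v)) = MulOpposite.op (algebraMap ℝ NA (Nform v)) from rfl]
  congr 1
  simp only [Nform_apply, Algebra.algebraMap_eq_smul_one]
  simp only [mul_sub, sub_mul, smul_mul_assoc, mul_smul_comm, smul_smul, mul_assoc]
  simp only [show K * (K * θ) = θ by rw [← mul_assoc, K_sq, one_mul],
    show K * (K * θb) = θb by rw [← mul_assoc, K_sq, one_mul],
    show θ * (K * θ) = 0 by rw [← mul_assoc, θK, neg_mul, mul_assoc, θ_sq, mul_zero, neg_zero],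
    show θb * (K * θb) = 0 by rw [← mul_assoc, θbK, neg_mul, mul_assoc, θb_sq, mul_zero, neg_zero],
    show θ * (K * θb) = -(θb * (K * θ)) by
      rw [← mul_assoc, ← mul_assoc, θK, θbK]; simp [mul_assoc, θbθ],
    θK, θbK, mul_neg, neg_mul, mul_zero, smul_zero, neg_neg, K_sq]
  module

def Sa : NA →ₐ[ℝ] NAᵐᵒᵖ := CliffordAlgebra.lift Nform ⟨fS, fS_sq⟩

def S : NA →ₗ[ℝ] NA := (MulOpposite.opLinearEquiv ℝ).symm.toLinearMap ∘ₗ Sa.toLinearMap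

lemma S_apply (x : NA) : S x = MulOpposite.unop (Sa x) := rfl

lemma Sa_ι (v : Fin 3 → ℝ) :
    Sa (CliffordAlgebra.ι Nform v) = fS v := CliffordAlgebra.lift_ι_apply ..

lemma SK : S K = K := by rw [K, S_apply, Sa_ι]; simp [fS, Pi.single_apply]; rfl
lemma Sθ : S θ = -(K * θ) := by rw [θ, S_apply, Sa_ι]; simp [fS, Pi.single_apply]; rfl
lemma Sθb : S θb = -(K * θb) := by rw [θb, S_apply, Sa_ι]; simp [fS, Pi.single_apply]; rfl

set_option synthInstance.maxHeartbeats 1000000 in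
set_option maxHeartbeats 1000000 in
lemma coassoc :
    ((Algebra.TensorProduct.assoc ℝ ℝ ℝ NA NA NA).toAlgHom.comp
        ((Algebra.TensorProduct.map Δ (AlgHom.id ℝ NA)).comp Δ)
      = (Algebra.TensorProduct.map (AlgHom.id ℝ NA) Δ).comp Δ) := by
  apply CliffordAlgebra.hom_ext
  apply LinearMap.ext
  intro v
  simp only [AlgHom.comp_toLinearMap, LinearMap.comp_apply, AlgHom.toLinearMap_apply,
    CliffordAlgebra.ι_comp_lift]
  show (Algebra.TensorProduct.assoc ℝ ℝ ℝ NA NA NA)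
      ((Algebra.TensorProduct.map Δ (AlgHom.id ℝ NA)) (Δ (CliffordAlgebra.ι Nform v)))
    = (Algebra.TensorProduct.map (AlgHom.id ℝ NA) Δ) (Δ (CliffordAlgebra.ι Nform v))
  rw [Δ_ι]
  simp only [fΔ, LinearMap.coe_mk, AddHom.coe_mk, map_add, map_smul,
    Algebra.TensorProduct.map_tmul, Algebra.TensorProduct.assoc_tmul, AlgHom.coe_id, id_eq,
    ΔK, Δθ, Δθb, map_one, TensorProduct.add_tmul, TensorProduct.tmul_add]
  abel

lemma counit_left :
    (Algebra.TensorProduct.lid ℝ NA).toAlgHom.comp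
        ((Algebra.TensorProduct.map ε (AlgHom.id ℝ NA)).comp Δ) = AlgHom.id ℝ NA := by
  apply CliffordAlgebra.hom_ext
  apply LinearMap.ext
  intro v
  show (Algebra.TensorProduct.lid ℝ NA)
      ((Algebra.TensorProduct.map ε (AlgHom.id ℝ NA)) (Δ (CliffordAlgebra.ι Nform v)))
    = CliffordAlgebra.ι Nform v
  rw [Δ_ι]
  simp only [fΔ, LinearMap.coe_mk, AddHom.coe_mk, map_add, map_smul,
    Algebra.TensorProduct.map_tmul, AlgHom.coe_id, id_eq, εK, εθ, εθb,
    TensorProduct.lid_tmul, one_smul, zero_smul, zero_add, add_zero, smul_add,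
    TensorProduct.zero_tmul]
  rw [show (CliffordAlgebra.ι Nform) v
      = v 0 • K + v 1 • θ + v 2 • θb by
    rw [K, θ, θb, ← map_smul, ← map_smul, ← map_smul, ← map_add, ← map_add]
    congr 1
    ext i
    fin_cases i <;> simp]
  simp

lemma counit_right :
    (Algebra.TensorProduct.rid ℝ ℝ NA).toAlgHom.comp
        ((Algebra.TensorProduct.map (AlgHom.id ℝ NA) ε).comp Δ) = AlgHom.id ℝ NA := by
  apply CliffordAlgebra.hom_ext
  apply LinearMap.ext
  intro v
  show (Algebra.TensorProduct.rid ℝ ℝ NA)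
      ((Algebra.TensorProduct.map (AlgHom.id ℝ NA) ε) (Δ (CliffordAlgebra.ι Nform v)))
    = CliffordAlgebra.ι Nform v
  rw [Δ_ι]
  simp only [fΔ, LinearMap.coe_mk, AddHom.coe_mk, map_add, map_smul,
    Algebra.TensorProduct.map_tmul, AlgHom.coe_id, id_eq, εK, εθ, εθb, map_one,
    Algebra.TensorProduct.rid_tmul, one_smul, zero_smul, smul_zero, zero_add, add_zero, smul_add]
  rw [show (CliffordAlgebra.ι Nform) v
      = v 0 • K + v 1 • θ + v 2 • θb by
    rw [K, θ, θb, ← map_smul, ← map_smul, ← map_smul, ← map_add, ← map_add]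
    congr 1
    ext i
    fin_cases i <;> simp]

def L : NA ⊗[ℝ] NA →ₗ[ℝ] NA := (LinearMap.mul' ℝ NA).comp (TensorProduct.map S LinearMap.id)

lemma L_tmul (x y : NA) : L (x ⊗ₜ[ℝ] y) = S x * y := by
  simp [L]

lemma S_mul (x y : NA) : S (x * y) = S y * S x := by
  simp only [S_apply, map_mul, MulOpposite.unop_mul]

lemma L_mul_tmul (a : NA ⊗[ℝ] NA) (y₁ y₂ : NA) :
    L (a * (y₁ ⊗ₜ[ℝ] y₂)) = S y₁ * L a * y₂ := by
  induction a using TensorProduct.induction_on with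
  | zero => simp
  | tmul x₁ x₂ =>
      rw [Algebra.TensorProduct.tmul_mul_tmul, L_tmul, L_tmul, S_mul]
      noncomm_ring
  | add a b ha hb => rw [add_mul, map_add, ha, hb, map_add, mul_add, add_mul]

lemma L_mul_scalar (a b : NA ⊗[ℝ] NA) (α : ℝ) (ha : L a = algebraMap ℝ NA α) :
    L (a * b) = α • L b := by
  induction b using TensorProduct.induction_on with
  | zero => simp
  | tmul y₁ y₂ =>
      rw [L_mul_tmul, ha, L_tmul]
      rw [mul_assoc, ← Algebra.smul_def, mul_smul_comm]
  | add b c hb hc => rw [mul_add, map_add, hb, hc, map_add, smul_add]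

lemma antipode_left (x : NA) : L (Δ x) = algebraMap ℝ NA (ε x) := by
  induction x using CliffordAlgebra.induction with
  | algebraMap r =>
      rw [AlgHom.commutes, AlgHom.commutes]
      rw [Algebra.TensorProduct.algebraMap_apply, L_tmul]
      rw [show S (algebraMap ℝ NA r) = algebraMap ℝ NA r by
        simp [S_apply, AlgHom.commutes]]
      simp [Algebra.smul_def]
  | ι v =>
      rw [Δ_ι, ε_ι]
      simp only [fΔ, LinearMap.coe_mk, AddHom.coe_mk, map_add, map_smul, L_tmul, SK, Sθ, Sθb,
        K_sq, mul_one, one_mul]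
      simp [Algebra.smul_def]
  | mul x y hx hy =>
      rw [map_mul, L_mul_scalar _ _ _ hx, hy, map_mul, Algebra.smul_def, ← map_mul]
  | add x y hx hy => rw [map_add, map_add, hx, hy, map_add]; rw [map_add]

def L' : NA ⊗[ℝ] NA →ₗ[ℝ] NA := (LinearMap.mul' ℝ NA).comp (TensorProduct.map LinearMap.id S)

lemma L'_tmul (x y : NA) : L' (x ⊗ₜ[ℝ] y) = x * S y := by
  simp [L']

lemma L'_tmul_mul (b : NA ⊗[ℝ] NA) (x₁ x₂ : NA) :
    L' ((x₁ ⊗ₜ[ℝ] x₂) * b) = x₁ * L' b * S x₂ := by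
  induction b using TensorProduct.induction_on with
  | zero => simp
  | tmul y₁ y₂ =>
      rw [Algebra.TensorProduct.tmul_mul_tmul, L'_tmul, L'_tmul, S_mul]
      noncomm_ring
  | add a b ha hb => rw [mul_add, map_add, ha, hb, map_add, mul_add, add_mul]

lemma L'_mul_scalar (a b : NA ⊗[ℝ] NA) (β : ℝ) (hb : L' b = algebraMap ℝ NA β) :
    L' (a * b) = β • L' a := by
  induction a using TensorProduct.induction_on with
  | zero => simp
  | tmul x₁ x₂ =>
      rw [L'_tmul_mul, hb, L'_tmul]
      rw [← Algebra.commutes, mul_assoc, ← Algebra.smul_def]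
  | add a c ha hc => rw [add_mul, map_add, ha, hc, map_add, smul_add]

lemma antipode_right (x : NA) : L' (Δ x) = algebraMap ℝ NA (ε x) := by
  induction x using CliffordAlgebra.induction with
  | algebraMap r =>
      rw [AlgHom.commutes, AlgHom.commutes]
      rw [Algebra.TensorProduct.algebraMap_apply, L'_tmul]
      rw [show S (1 : NA) = 1 by simp [S_apply]]
      simp
  | ι v =>
      rw [Δ_ι, ε_ι]
      simp only [fΔ, LinearMap.coe_mk, AddHom.coe_mk, map_add, map_smul, L'_tmul, SK, Sθ, Sθb,
        K_sq, mul_one, one_mul]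
      rw [show S (1 : NA) = 1 by simp [S_apply]]
      rw [show K * -(K * θ) = -θ by rw [mul_neg, ← mul_assoc, K_sq, one_mul],
        show K * -(K * θb) = -θb by rw [mul_neg, ← mul_assoc, K_sq, one_mul]]
      simp [Algebra.smul_def]
  | mul x y hx hy =>
      rw [map_mul, L'_mul_scalar _ _ _ hy, hx, map_mul, Algebra.smul_def, ← map_mul, mul_comm]
  | add x y hx hy => rw [map_add, map_add, hx, hy, map_add]; rw [map_add]

/-- `𝒩` admits a Hopf algebra structure over `ℝ`: there exist an algebra
homomorphism `Δ : 𝒩 → 𝒩 ⊗ 𝒩` (the coproduct), an algebra homomorphism `ε : 𝒩 → ℝ`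
(the counit), and a linear map `S : 𝒩 → 𝒩` (the antipode) satisfying coassociativity,
the counit laws and the antipode laws, with the prescribed values on the generators
`K`, `θ`, `θ̄`. -/
theorem stmt0 :
    ∃ (Δ : NA →ₐ[ℝ] NA ⊗[ℝ] NA) (ε : NA →ₐ[ℝ] ℝ) (S : NA →ₗ[ℝ] NA),
      -- coassociativity
      ((Algebra.TensorProduct.assoc ℝ ℝ ℝ NA NA NA).toAlgHom.comp
          ((Algebra.TensorProduct.map Δ (AlgHom.id ℝ NA)).comp Δ)
        = (Algebra.TensorProduct.map (AlgHom.id ℝ NA) Δ).comp Δ) ∧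
      -- left counit law
      ((Algebra.TensorProduct.lid ℝ NA).toAlgHom.comp
          ((Algebra.TensorProduct.map ε (AlgHom.id ℝ NA)).comp Δ) = AlgHom.id ℝ NA) ∧
      -- right counit law
      ((Algebra.TensorProduct.rid ℝ ℝ NA).toAlgHom.comp
          ((Algebra.TensorProduct.map (AlgHom.id ℝ NA) ε).comp Δ) = AlgHom.id ℝ NA) ∧
      -- antipode laws:  m ∘ (S ⊗ id) ∘ Δ = η ∘ ε  and  m ∘ (id ⊗ S) ∘ Δ = η ∘ ε
      (∀ x : NA, LinearMap.mul' ℝ NA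
          (TensorProduct.map S LinearMap.id (Δ x)) = algebraMap ℝ NA (ε x)) ∧
      (∀ x : NA, LinearMap.mul' ℝ NA
          (TensorProduct.map LinearMap.id S (Δ x)) = algebraMap ℝ NA (ε x)) ∧
      -- values on the generators
      Δ K = K ⊗ₜ[ℝ] K ∧
      Δ θ = θ ⊗ₜ[ℝ] 1 + K ⊗ₜ[ℝ] θ ∧
      Δ θb = θb ⊗ₜ[ℝ] 1 + K ⊗ₜ[ℝ] θb ∧
      ε K = 1 ∧ ε θ = 0 ∧ ε θb = 0 ∧
      S K = K ∧ S θ = -(K * θ) ∧ S θb = -(K * θb) := by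
  exact ⟨Δ, ε, S, coassoc, counit_left, counit_right, antipode_left, antipode_right,
    ΔK, Δθ, Δθb, εK, εθ, εθb, SK, Sθ, Sθb⟩
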